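/- arXiv:1204.6600 — 5 statements merged into one kernel-verified Lean document; each statement's English description precedes it below -/
import Mathlib

section
/- For any summable sequence $(a_i)_{i\in\mathbb{Z}}$ of nonnegative real numbers and any real $s \geq 1$, one has $\left(\sum_{i} a_i\right)^s \leq s \sum_{i} a_i \left(\sum_{j \geq i} a_j\right)^{s-1}$. -/
/-!
Write `T i = ∑_{j ≥ i} a j`. By convexity of `x ↦ x ^ s`,
`T i ^ s - T (i + 1) ^ s ≤ s * T i ^ (s - 1) * a i`. Summed over `ℤ`, the left side telescopes
to `(∑ a) ^ s`, because `T` tends to `∑ a` at `-∞` and to `0` at `+∞`.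
-/

open Filter Topology Set

lemma Real.rpow_sub_rpow_le_mul_rpow_sub_one_mul {s x y : ℝ} (hs : 1 ≤ s) (hy : 0 ≤ y)
    (hyx : y ≤ x) : x ^ s - y ^ s ≤ s * x ^ (s - 1) * (x - y) := by
  obtain rfl | hx := (hy.trans hyx).eq_or_lt
  · rw [le_antisymm hyx hy, Real.zero_rpow (by linarith)]
    simp
  -- Bernoulli's inequality `1 + s (t - 1) ≤ t ^ s` at `t = y / x`, multiplied by `x ^ s`.
  have bernoulli := one_add_mul_self_le_rpow_one_add (s := y / x - 1) (by
    have := div_nonneg hy hx.le; linarith) hs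
  rw [add_sub_cancel, Real.div_rpow hy hx.le, le_div_iff₀ (Real.rpow_pos_of_pos hx s)] at bernoulli
  have hxs : x ^ s = x ^ (s - 1) * x := by
    rw [← Real.rpow_add_one hx.ne', sub_add_cancel]
  rw [hxs] at bernoulli ⊢
  field_simp at bernoulli
  nlinarith [Real.rpow_pos_of_pos hx (s - 1)]

lemma sub_le_sub_of_forall_sub_succ_le {F G : ℤ → ℝ} {A B C D : ℝ}
    (h : ∀ i, F i - F (i + 1) ≤ G i - G (i + 1))
    (hFbot : Tendsto F atBot (𝓝 A)) (hFtop : Tendsto F atTop (𝓝 B))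
    (hGbot : Tendsto G atBot (𝓝 C)) (hGtop : Tendsto G atTop (𝓝 D)) :
    A - B ≤ C - D := by
  have hmono : Monotone (F - G) := monotone_int_of_le_succ fun i => by
    simp only [Pi.sub_apply]
    linarith [h i]
  have hbot := hmono.le_of_tendsto (hFbot.sub hGbot) 0
  have htop := hmono.ge_of_tendsto (hFtop.sub hGtop) 0
  linarith

noncomputable def tailSum (a : ℤ → ℝ) (i : ℤ) : ℝ := ∑' j : {j : ℤ // i ≤ j}, a j

lemma tailSum_eq_tsum_indicator (a : ℤ → ℝ) (i : ℤ) :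
    tailSum a i = ∑' j, (Ici i).indicator a j :=
  tsum_subtype (Ici i) a

section tailSum

variable {a : ℤ → ℝ}

lemma tailSum_eq_add_tailSum_add_one (ha : Summable a) (i : ℤ) :
    tailSum a i = a i + tailSum a (i + 1) := by
  rw [tailSum_eq_tsum_indicator, tailSum_eq_tsum_indicator, (ha.indicator _).tsum_eq_add_tsum_ite i]
  congr 1
  · simp
  · refine tsum_congr fun j => ?_
    by_cases hj : j = i
    · simp [hj]
    · have hij : i ≤ j ↔ i + 1 ≤ j := by omega
      simp only [hj, if_false, indicator, mem_Ici, hij]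

lemma tendsto_tailSum {l : Filter ℤ} {b : ℤ → ℝ} (ha : Summable a)
    (hb : ∀ j, Tendsto (fun i => (Ici i).indicator a j) l (𝓝 (b j))) :
    Tendsto (tailSum a) l (𝓝 (∑' j, b j)) := by
  simp only [funext (tailSum_eq_tsum_indicator a)]
  refine tendsto_tsum_of_dominated_convergence ha.abs hb (Eventually.of_forall fun _ j => ?_)
  exact norm_indicator_le_norm_self a j

lemma tendsto_tailSum_atTop (ha : Summable a) : Tendsto (tailSum a) atTop (𝓝 0) := by
  simpa using tendsto_tailSum ha (b := 0) fun j => tendsto_const_nhds.congr' <|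
    (eventually_gt_atTop j).mono fun _ hi => (indicator_of_notMem (notMem_Ici.2 hi) a).symm

lemma tendsto_tailSum_atBot (ha : Summable a) : Tendsto (tailSum a) atBot (𝓝 (∑' j, a j)) :=
  tendsto_tailSum ha fun j => tendsto_const_nhds.congr' <|
    (eventually_le_atBot j).mono fun _ hi => (indicator_of_mem (mem_Ici.2 hi) a).symm

lemma tailSum_nonneg (ha : ∀ i, 0 ≤ a i) (i : ℤ) : 0 ≤ tailSum a i :=
  tsum_nonneg fun j => ha j

lemma tailSum_le_tsum (ha : ∀ i, 0 ≤ a i) (hsum : Summable a) (i : ℤ) : tailSum a i ≤ ∑' j, a j :=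
  hsum.tsum_subtype_le a _ ha

end tailSum

/-- Elementary inequality: for a summable sequence of nonnegative reals indexed by `ℤ`
and `s ≥ 1`, `(∑ a_i)^s ≤ s * ∑_i a_i (∑_{j ≥ i} a_j)^(s-1)`. -/
theorem stmt_0 (a : ℤ → ℝ) (ha : ∀ i, 0 ≤ a i) (hsum : Summable a)
    (s : ℝ) (hs : 1 ≤ s) :
    (∑' i, a i) ^ s ≤ s * ∑' i : ℤ, a i * (∑' j : {j : ℤ // i ≤ j}, a j.1) ^ (s - 1) := by
  set g : ℤ → ℝ := fun i => a i * tailSum a i ^ (s - 1)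
  have hg : Summable g := by
    refine (hsum.mul_right ((∑' j, a j) ^ (s - 1))).of_nonneg_of_le
      (fun i => mul_nonneg (ha i) (Real.rpow_nonneg (tailSum_nonneg ha i) _)) fun i => ?_
    exact mul_le_mul_of_nonneg_left (Real.rpow_le_rpow (tailSum_nonneg ha i)
      (tailSum_le_tsum ha hsum i) (by linarith)) (ha i)
  have hstep (i : ℤ) : tailSum a i ^ s - tailSum a (i + 1) ^ s
      ≤ s * tailSum g i - s * tailSum g (i + 1) := by
    have hai := tailSum_eq_add_tailSum_add_one hsum i
    have hgi : tailSum g i = a i * tailSum a i ^ (s - 1) + tailSum g (i + 1) :=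
      tailSum_eq_add_tailSum_add_one hg i
    calc tailSum a i ^ s - tailSum a (i + 1) ^ s
        ≤ s * tailSum a i ^ (s - 1) * (tailSum a i - tailSum a (i + 1)) :=
          Real.rpow_sub_rpow_le_mul_rpow_sub_one_mul hs (tailSum_nonneg ha _) (by linarith [ha i])
      _ = s * tailSum g i - s * tailSum g (i + 1) := by
          rw [hgi, show tailSum a i - tailSum a (i + 1) = a i by linarith]; ring
  have hs0 : 0 < s := by linarith
  have key := sub_le_sub_of_forall_sub_succ_le hstep
    ((tendsto_tailSum_atBot hsum).rpow_const (.inr hs0.le))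
    ((tendsto_tailSum_atTop hsum).rpow_const (.inr hs0.le))
    ((tendsto_tailSum_atBot hg).const_mul s) ((tendsto_tailSum_atTop hg).const_mul s)
  rw [Real.zero_rpow hs0.ne', mul_zero, sub_zero, sub_zero] at key
  exact key
end

section
/- Let $(\Omega,\mathcal{F},\mu;(\mathcal{F}_i)_{i\in\mathbb{Z}})$ be a $\sigma$-finite filtered measure space, $s > 1$, $w$ a bounded integrable nonnegative weight, and $\alpha_i$ nonnegative bounded $\mathcal{F}_i$-measurable functions with only finitely many nonzero. Then $\int_\Omega \big(\sup_{i} \mathcal{E}_i(\overline{\alpha}_i w)\big)^s d\mu \leq C \int_\Omega \big(\sum_{i} \alpha_i \mathcal{E}_i w\big)^s d\mu$, where $\overline{\alpha}_i := \sum_{j\geq i}\alpha_j$ and $C$ depends only on $s$. -/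
/-!
For `j ≥ i` the tower property and `ℱ j`-measurability of `α j` give
`E_i(α_j w) = E_i(α_j E_j w)`, so `E_i(ᾱ_i w) ≤ E_i G` with `G = ∑_j α_j E_j w`, and the left-hand
side is controlled by the maximal function of the martingale `(E_i G)_i`.

Doob's `L^s` inequality for this maximal function follows from the weak-type estimate
`t μ{sup_i E_i G > t} ≤ ∫_{sup_i E_i G > t} G`, obtained by splitting the level set according to the
first index at which `E_i G` exceeds `t`. The layer-cake formula turns it into
`(s - 1) ∫ (sup_i E_i G)^s ≤ s ∫ G (sup_i E_i G)^(s-1)`, and Hölder's inequality then yields the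
constant `(s / (s - 1))^s`; boundedness of `w` keeps `∫ (sup_i E_i G)^s` finite, so it can be
cancelled.
-/

open MeasureTheory Set
open scoped ENNReal

theorem ENNReal.le_rpow_of_le_mul_rpow {p q : ℝ} (hpq : p.HolderConjugate q) {a b : ℝ≥0∞}
    (ha : a ≠ ∞) (h : a ≤ b * a ^ (1 / q)) : a ≤ b ^ p := by
  rcases eq_or_ne a 0 with rfl | ha0
  · exact zero_le
  have hsplit : a = a ^ (1 / p) * a ^ (1 / q) := by
    rw [← ENNReal.rpow_add _ _ ha0 ha, hpq.one_div_add_one_div, div_one, ENNReal.rpow_one]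
  have hroot : a ^ (1 / p) ≤ b := by
    refine (ENNReal.mul_le_mul_iff_left (ENNReal.rpow_pos (pos_iff_ne_zero.2 ha0) ha).ne'
      (ENNReal.rpow_ne_top_of_nonneg (one_div_nonneg.2 hpq.symm.nonneg) ha)).1 ?_
    rwa [← hsplit]
  calc a = (a ^ (1 / p)) ^ p := by
        rw [← ENNReal.rpow_mul, one_div_mul_cancel hpq.ne_zero, ENNReal.rpow_one]
    _ ≤ b ^ p := ENNReal.rpow_le_rpow hroot hpq.nonneg

section

variable {Ω : Type*} {m0 : MeasurableSpace Ω} {μ : Measure Ω}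

theorem mul_lintegral_rpow_le_of_mul_meas_lt_le {p : ℝ} (hp : 1 < p) {τ : Ω → ℝ} (hτ0 : 0 ≤ τ)
    (hτ : Measurable τ) {g : Ω → ℝ≥0∞} (hg : AEMeasurable g μ)
    (hweak : ∀ t > 0, ENNReal.ofReal t * μ {x | t < τ x} ≤ ∫⁻ x in {x | t < τ x}, g x ∂μ) :
    ENNReal.ofReal (p - 1) * ∫⁻ x, ENNReal.ofReal (τ x ^ p) ∂μ ≤
      ENNReal.ofReal p * ∫⁻ x, g x * ENNReal.ofReal (τ x ^ (p - 1)) ∂μ := by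
  set ν := μ.withDensity g
  -- both sides are layer-cake integrals: of `τ ^ p` against `μ`, and of `τ ^ (p - 1)` against `ν`
  have htail : ∀ t ∈ Ioi (0 : ℝ), μ {x | t < τ x} * ENNReal.ofReal (t ^ (p - 1)) ≤
      ν {x | t < τ x} * ENNReal.ofReal (t ^ (p - 1 - 1)) := by
    intro t (ht : 0 < t)
    rw [withDensity_apply _ (measurableSet_lt measurable_const hτ)]
    calc μ {x | t < τ x} * ENNReal.ofReal (t ^ (p - 1))
        = ENNReal.ofReal t * μ {x | t < τ x} * ENNReal.ofReal (t ^ (p - 1 - 1)) := by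
          rw [mul_comm (ENNReal.ofReal t), mul_assoc, ← ENNReal.ofReal_mul ht.le,
            ← Real.rpow_one_add' ht.le (by linarith)]
          ring_nf
      _ ≤ _ := by gcongr; exact hweak t ht
  calc ENNReal.ofReal (p - 1) * ∫⁻ x, ENNReal.ofReal (τ x ^ p) ∂μ
      = ENNReal.ofReal (p - 1) * (ENNReal.ofReal p *
          ∫⁻ t in Ioi 0, μ {x | t < τ x} * ENNReal.ofReal (t ^ (p - 1))) := by
        rw [lintegral_rpow_eq_lintegral_meas_lt_mul μ (ae_of_all _ hτ0) hτ.aemeasurable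
          (by linarith)]
    _ ≤ ENNReal.ofReal (p - 1) * (ENNReal.ofReal p *
          ∫⁻ t in Ioi 0, ν {x | t < τ x} * ENNReal.ofReal (t ^ (p - 1 - 1))) := by
        gcongr ENNReal.ofReal (p - 1) * (ENNReal.ofReal p * ?_)
        exact setLIntegral_mono' measurableSet_Ioi htail
    _ = ENNReal.ofReal p * ∫⁻ x, ENNReal.ofReal (τ x ^ (p - 1)) ∂ν := by
        rw [lintegral_rpow_eq_lintegral_meas_lt_mul ν (ae_of_all _ hτ0) hτ.aemeasurable
          (by linarith)]
        ring
    _ = ENNReal.ofReal p * ∫⁻ x, g x * ENNReal.ofReal (τ x ^ (p - 1)) ∂μ := by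
        rw [lintegral_withDensity_eq_lintegral_mul₀ hg (by fun_prop)]
        rfl

theorem lintegral_rpow_le_of_mul_meas_lt_le {p : ℝ} (hp : 1 < p) {τ : Ω → ℝ} (hτ0 : 0 ≤ τ)
    (hτ : Measurable τ) {M : ℝ} (hτM : ∀ᵐ x ∂μ, τ x ≤ M) {g : Ω → ℝ≥0∞} (hg : AEMeasurable g μ)
    (hg_fin : ∫⁻ x, g x ∂μ ≠ ∞)
    (hweak : ∀ t > 0, ENNReal.ofReal t * μ {x | t < τ x} ≤ ∫⁻ x in {x | t < τ x}, g x ∂μ) :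
    ∫⁻ x, ENNReal.ofReal (τ x) ^ p ∂μ ≤ ENNReal.ofReal (p / (p - 1)) ^ p * ∫⁻ x, g x ^ p ∂μ := by
  set q := p / (p - 1)
  have hpq : p.HolderConjugate q := (Real.holderConjugate_iff_eq_conjExponent hp).2 rfl
  set I := ∫⁻ x, ENNReal.ofReal (τ x) ^ p ∂μ
  set R := ∫⁻ x, g x ^ p ∂μ
  have hp1 : ENNReal.ofReal (p - 1) ≠ 0 := by simp [hp]
  have hkey := mul_lintegral_rpow_le_of_mul_meas_lt_le hp hτ0 hτ hg hweak
  simp_rw [← ENNReal.ofReal_rpow_of_nonneg (hτ0 _) (by linarith : 0 ≤ p),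
    ← ENNReal.ofReal_rpow_of_nonneg (hτ0 _) (by linarith : 0 ≤ p - 1)] at hkey
  have hI_fin : I ≠ ∞ := by
    have hM : ENNReal.ofReal M ^ (p - 1) ≠ ∞ :=
      ENNReal.rpow_ne_top_of_nonneg (by linarith) ENNReal.ofReal_ne_top
    have hbound : ∫⁻ x, g x * ENNReal.ofReal (τ x) ^ (p - 1) ∂μ ≤
        ENNReal.ofReal M ^ (p - 1) * ∫⁻ x, g x ∂μ := by
      rw [← lintegral_const_mul' _ _ hM]
      refine lintegral_mono_ae (hτM.mono fun x hx => ?_)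
      rw [mul_comm]
      gcongr
    intro hI
    have : ENNReal.ofReal (p - 1) * I ≤
        ENNReal.ofReal p * (ENNReal.ofReal M ^ (p - 1) * ∫⁻ x, g x ∂μ) := hkey.trans (by gcongr)
    rw [hI, ENNReal.mul_top hp1, top_le_iff] at this
    exact ENNReal.mul_ne_top ENNReal.ofReal_ne_top (ENNReal.mul_ne_top hM hg_fin) this
  have hHolder : ∫⁻ x, g x * ENNReal.ofReal (τ x) ^ (p - 1) ∂μ ≤ R ^ (1 / p) * I ^ (1 / q) := by
    have hpow : ∀ x, (ENNReal.ofReal (τ x) ^ (p - 1)) ^ q = ENNReal.ofReal (τ x) ^ p := by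
      intro x
      rw [← ENNReal.rpow_mul, show (p - 1) * q = p by
        simp only [q]; field_simp [(by linarith : p - 1 ≠ 0)]]
    have h := ENNReal.lintegral_mul_le_Lp_mul_Lq μ hpq hg
      (hτ.ennreal_ofReal.pow_const (p - 1)).aemeasurable
    simp only [Pi.mul_apply, hpow] at h
    exact h
  suffices I ≤ (ENNReal.ofReal q * R ^ (1 / p)) ^ p by
    rwa [ENNReal.mul_rpow_of_nonneg _ _ hpq.nonneg, ← ENNReal.rpow_mul,
      one_div_mul_cancel hpq.ne_zero, ENNReal.rpow_one] at this
  refine ENNReal.le_rpow_of_le_mul_rpow hpq hI_fin ?_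
  calc I = (ENNReal.ofReal (p - 1))⁻¹ * (ENNReal.ofReal (p - 1) * I) := by
        rw [← mul_assoc, ENNReal.inv_mul_cancel hp1 ENNReal.ofReal_ne_top, one_mul]
    _ ≤ (ENNReal.ofReal (p - 1))⁻¹ * (ENNReal.ofReal p * (R ^ (1 / p) * I ^ (1 / q))) := by
        gcongr (ENNReal.ofReal (p - 1))⁻¹ * ?_
        exact hkey.trans (by gcongr)
    _ = ENNReal.ofReal q * R ^ (1 / p) * I ^ (1 / q) := by
        rw [ENNReal.ofReal_div_of_pos (by linarith), ENNReal.div_eq_inv_mul]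
        ring

theorem mul_measure_le_setLIntegral_of_subset_lt_condExp {m : MeasurableSpace Ω} (hm : m ≤ m0)
    [SigmaFinite (μ.trim hm)] {G : Ω → ℝ} (hG : Integrable G μ) (hG0 : 0 ≤ᵐ[μ] G) {t : ℝ}
    {A : Set Ω} (hA : MeasurableSet[m] A) (hAt : A ⊆ {x | t < μ[G|m] x}) :
    ENNReal.ofReal t * μ A ≤ ∫⁻ x in A, ENNReal.ofReal (G x) ∂μ :=
  calc ENNReal.ofReal t * μ A = ∫⁻ _ in A, ENNReal.ofReal t ∂μ := (setLIntegral_const _ _).symm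
    _ ≤ ∫⁻ x in A, ENNReal.ofReal (μ[G|m] x) ∂μ :=
        setLIntegral_mono' (hm _ hA) fun x hx => ENNReal.ofReal_le_ofReal (hAt hx).le
    _ = ENNReal.ofReal (∫ x in A, μ[G|m] x ∂μ) :=
        (ofReal_integral_eq_lintegral_ofReal integrable_condExp.integrableOn
          (ae_restrict_of_ae (condExp_nonneg hG0))).symm
    _ = ∫⁻ x in A, ENNReal.ofReal (G x) ∂μ := by
        rw [setIntegral_condExp hm hG hA,
          ofReal_integral_eq_lintegral_ofReal hG.integrableOn (ae_restrict_of_ae hG0)]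

theorem condExp_mul_condExp_of_le {m₁ m₂ : MeasurableSpace Ω} (h₁₂ : m₁ ≤ m₂) (h₂ : m₂ ≤ m0)
    [SigmaFinite (μ.trim h₂)] {f g : Ω → ℝ} (hf : StronglyMeasurable[m₂] f)
    (hfg : Integrable (f * g) μ) (hg : Integrable g μ) :
    μ[f * μ[g|m₂]|m₁] =ᵐ[μ] μ[f * g|m₁] :=
  (condExp_congr_ae (condExp_mul_of_stronglyMeasurable_left hf hfg hg)).symm.trans
    (condExp_condExp_of_le h₁₂ h₂)

section Filtration

variable {ι : Type*} [LinearOrder ι] {ℱ : Filtration ι m0} [SigmaFiniteFiltration μ ℱ]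
  {G : Ω → ℝ} {α : ι → Ω → ℝ} {w : Ω → ℝ}

theorem mul_measure_biUnion_lt_condExp_le (hG : Integrable G μ) (hG0 : 0 ≤ᵐ[μ] G) (t : ℝ)
    (F : Finset ι) :
    ENNReal.ofReal t * μ (⋃ i ∈ F, {x | t < μ[G|ℱ i] x}) ≤
      ∫⁻ x in ⋃ i ∈ F, {x | t < μ[G|ℱ i] x}, ENNReal.ofReal (G x) ∂μ := by
  classical
  have hmeas : ∀ i, MeasurableSet[ℱ i] {x | t < μ[G|ℱ i] x} := fun i =>
    stronglyMeasurable_condExp.measurable measurableSet_Ioi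
  induction F using Finset.induction_on_max with
  | empty => simp
  | insert b F hlt ih =>
    set U := ⋃ i ∈ F, {x | t < μ[G|ℱ i] x}
    set B := {x | t < μ[G|ℱ b] x}
    -- the new piece `B \ U` is `ℱ b`-measurable because every index in `F` precedes `b`
    have hU : MeasurableSet[ℱ b] U :=
      Finset.measurableSet_biUnion F fun i hi => ℱ.mono (hlt i hi).le _ (hmeas i)
    have hBU : MeasurableSet (B \ U) := ℱ.le b _ ((hmeas b).diff hU)
    have hsplit : B ∪ U = U ∪ B \ U := by rw [Set.union_comm, Set.union_sdiff_self]
    rw [Finset.set_biUnion_insert, hsplit, measure_union disjoint_sdiff_right hBU,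
      lintegral_union hBU disjoint_sdiff_right, mul_add]
    exact add_le_add ih (mul_measure_le_setLIntegral_of_subset_lt_condExp (ℱ.le b) hG hG0
      ((hmeas b).diff hU) Set.sdiff_subset)

theorem mul_measure_exists_lt_condExp_le [Countable ι] (hG : Integrable G μ) (hG0 : 0 ≤ᵐ[μ] G)
    (t : ℝ) :
    ENNReal.ofReal t * μ {x | ∃ i, t < μ[G|ℱ i] x} ≤
      ∫⁻ x in {x | ∃ i, t < μ[G|ℱ i] x}, ENNReal.ofReal (G x) ∂μ := by
  have hU : {x | ∃ i, t < μ[G|ℱ i] x} = ⋃ F : Finset ι, ⋃ i ∈ F, {x | t < μ[G|ℱ i] x} := by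
    ext x
    simp only [Set.mem_ofPred_eq, Set.mem_iUnion, exists_prop]
    exact ⟨fun ⟨i, hi⟩ => ⟨{i}, i, Finset.mem_singleton_self i, hi⟩,
      fun ⟨_, i, _, hi⟩ => ⟨i, hi⟩⟩
  have hdir : Directed (· ⊆ ·) fun F : Finset ι => ⋃ i ∈ F, {x | t < μ[G|ℱ i] x} :=
    Monotone.directed_le fun F F' h => Set.biUnion_subset_biUnion_left h
  rw [hU, hdir.measure_iUnion, ENNReal.mul_iSup]
  exact iSup_le fun F => (mul_measure_biUnion_lt_condExp_le hG hG0 t F).trans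
    (lintegral_mono_set (Set.subset_iUnion (fun F : Finset ι => ⋃ i ∈ F, {x | t < μ[G|ℱ i] x}) F))

theorem lintegral_iSup_condExp_rpow_le [Countable ι] {p : ℝ} (hp : 1 < p)
    (hG : Integrable G μ) (hG0 : 0 ≤ᵐ[μ] G) {M : ℝ} (hGM : ∀ᵐ x ∂μ, G x ≤ M) :
    ∫⁻ x, (⨆ i, ENNReal.ofReal (μ[G|ℱ i] x)) ^ p ∂μ ≤
      ENNReal.ofReal ((p / (p - 1)) ^ p) * ∫⁻ x, ENNReal.ofReal (G x ^ p) ∂μ := by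
  set T : Ω → ℝ≥0∞ := fun x => ⨆ i, ENNReal.ofReal (μ[G|ℱ i] x)
  set τ : Ω → ℝ := fun x => (T x).toReal
  have hM : 0 ≤ max M 0 := le_max_right _ _
  have hTM : ∀ᵐ x ∂μ, T x ≤ ENNReal.ofReal (max M 0) := by
    have : ∀ᵐ x ∂μ, ∀ i, μ[G|ℱ i] x ≤ max M 0 := ae_all_iff.2 fun i =>
      condExp_le_nonneg_const hM (hGM.mono fun x hx => hx.trans (le_max_left _ _))
    exact this.mono fun x hx => iSup_le fun i => ENNReal.ofReal_le_ofReal (hx i)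
  have hT_ne_top : ∀ᵐ x ∂μ, T x ≠ ∞ :=
    hTM.mono fun x hx => ne_top_of_le_ne_top ENNReal.ofReal_ne_top hx
  have hτ : Measurable τ := (Measurable.iSup fun i =>
    (stronglyMeasurable_condExp.mono (ℱ.le i)).measurable.ennreal_ofReal).ennreal_toReal
  have hweak : ∀ t > 0, ENNReal.ofReal t * μ {x | t < τ x} ≤
      ∫⁻ x in {x | t < τ x}, ENNReal.ofReal (G x) ∂μ := by
    intro t ht
    have hset : {x | t < τ x} =ᵐ[μ] {x | ∃ i, t < μ[G|ℱ i] x} := by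
      refine Filter.eventuallyEq_set.2 (hT_ne_top.mono fun x hx => ?_)
      simp only [Set.mem_ofPred_eq, τ, T, ← ENNReal.ofReal_lt_iff_lt_toReal ht.le hx, lt_iSup_iff,
        ENNReal.ofReal_lt_ofReal_iff_of_nonneg ht.le]
    rw [measure_congr hset, setLIntegral_congr hset]
    exact mul_measure_exists_lt_condExp_le hG hG0 t
  calc ∫⁻ x, T x ^ p ∂μ = ∫⁻ x, ENNReal.ofReal (τ x) ^ p ∂μ :=
        lintegral_congr_ae (hT_ne_top.mono fun x hx => by simp only [τ, ENNReal.ofReal_toReal hx])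
    _ ≤ _ := lintegral_rpow_le_of_mul_meas_lt_le hp (fun x => ENNReal.toReal_nonneg) hτ
        (hTM.mono fun x hx => ENNReal.toReal_le_of_le_ofReal hM hx) hG.1.aemeasurable.ennreal_ofReal
        hG.lintegral_lt_top.ne hweak
    _ = _ := by
        rw [ENNReal.ofReal_rpow_of_nonneg (div_pos (by linarith) (by linarith)).le (by linarith)]
        exact congrArg _ (lintegral_congr_ae (hG0.mono fun x hx =>
          ENNReal.ofReal_rpow_of_nonneg hx (by linarith)))

theorem condExp_tail_mul_le_condExp_sum_mul_condExp (hα : ∀ j, StronglyMeasurable[ℱ j] (α j))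
    (hα0 : ∀ j, 0 ≤ α j) (hαw : ∀ j, Integrable (α j * w) μ)
    (hαEw : ∀ j, Integrable (α j * μ[w|ℱ j]) μ) (hw : Integrable w μ) (hw0 : 0 ≤ᵐ[μ] w)
    (S : Finset ι) (i : ι) :
    μ[(∑ j ∈ S with i ≤ j, α j) * w|ℱ i] ≤ᵐ[μ] μ[∑ j ∈ S, α j * μ[w|ℱ j]|ℱ i] := by
  have hEw0 : ∀ j, 0 ≤ᵐ[μ] α j * μ[w|ℱ j] := fun j =>
    (condExp_nonneg hw0).mono fun x hx => mul_nonneg (hα0 j x) hx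
  calc μ[(∑ j ∈ S with i ≤ j, α j) * w|ℱ i]
      = μ[∑ j ∈ S with i ≤ j, α j * w|ℱ i] := by rw [Finset.sum_mul]
    _ =ᵐ[μ] ∑ j ∈ S with i ≤ j, μ[α j * w|ℱ i] := condExp_finsetSum (fun j _ => hαw j) _
    _ =ᵐ[μ] ∑ j ∈ S with i ≤ j, μ[α j * μ[w|ℱ j]|ℱ i] := eventuallyEq_sum fun j hj =>
        (condExp_mul_condExp_of_le (ℱ.mono (Finset.mem_filter.1 hj).2) (ℱ.le j) (hα j) (hαw j)
          hw).symm
    _ =ᵐ[μ] μ[∑ j ∈ S with i ≤ j, α j * μ[w|ℱ j]|ℱ i] :=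
        (condExp_finsetSum (fun j _ => hαEw j) _).symm
    _ ≤ᵐ[μ] μ[∑ j ∈ S, α j * μ[w|ℱ j]|ℱ i] := by
        refine condExp_mono (integrable_finsetSum' _ fun j _ => hαEw j)
          (integrable_finsetSum' _ fun j _ => hαEw j) ?_
        filter_upwards [(Filter.eventually_all_finset S).2 fun j _ => hEw0 j] with x hx
        simp only [Finset.sum_apply]
        exact Finset.sum_le_sum_of_subset_of_nonneg (Finset.filter_subset _ S)
          fun j hj _ => hx j hj

theorem lintegral_iSup_condExp_tail_mul_rpow_le [Countable ι] {p : ℝ} (hp : 1 < p)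
    (hα : ∀ j, StronglyMeasurable[ℱ j] (α j)) (hα0 : ∀ j, 0 ≤ α j)
    (hαb : ∀ j, ∃ C, ∀ᵐ x ∂μ, α j x ≤ C) (hw : Integrable w μ) (hw0 : 0 ≤ᵐ[μ] w) {M : ℝ}
    (hwM : ∀ᵐ x ∂μ, w x ≤ M) (S : Finset ι) :
    ∫⁻ x, (⨆ i, ENNReal.ofReal (μ[(∑ j ∈ S with i ≤ j, α j) * w|ℱ i] x)) ^ p ∂μ ≤
      ENNReal.ofReal ((p / (p - 1)) ^ p) *
        ∫⁻ x, ENNReal.ofReal ((∑ j ∈ S, α j x * μ[w|ℱ j] x) ^ p) ∂μ := by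
  choose C hC using hαb
  have hnorm : ∀ j, ∀ᵐ x ∂μ, ‖α j x‖ ≤ C j := fun j =>
    (hC j).mono fun x hx => by rwa [Real.norm_of_nonneg (hα0 j x)]
  have hαw : ∀ j, Integrable (α j * w) μ := fun j =>
    hw.bdd_mul ((hα j).mono (ℱ.le j)).aestronglyMeasurable (hnorm j)
  have hαEw : ∀ j, Integrable (α j * μ[w|ℱ j]) μ := fun j =>
    integrable_condExp.bdd_mul ((hα j).mono (ℱ.le j)).aestronglyMeasurable (hnorm j)
  have hEw : ∀ᵐ x ∂μ, ∀ j, 0 ≤ μ[w|ℱ j] x ∧ μ[w|ℱ j] x ≤ max M 0 := ae_all_iff.2 fun j =>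
    (condExp_nonneg hw0).and
      (condExp_le_nonneg_const (le_max_right _ _) (hwM.mono fun x hx => hx.trans (le_max_left _ _)))
  set G := ∑ j ∈ S, α j * μ[w|ℱ j]
  have hG_apply : ∀ x, G x = ∑ j ∈ S, α j x * μ[w|ℱ j] x := fun x => by
    simp only [G, Finset.sum_apply, Pi.mul_apply]
  have hG0 : 0 ≤ᵐ[μ] G := hEw.mono fun x hx => by
    rw [Pi.zero_apply, hG_apply]
    exact Finset.sum_nonneg fun j _ => mul_nonneg (hα0 j x) (hx j).1
  have hGM : ∀ᵐ x ∂μ, G x ≤ ∑ j ∈ S, C j * max M 0 := (hEw.and (ae_all_iff.2 hC)).mono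
    fun x hx => by
      rw [hG_apply]
      exact Finset.sum_le_sum fun j _ =>
        mul_le_mul (hx.2 j) (hx.1 j).2 (hx.1 j).1 ((hα0 j x).trans (hx.2 j))
  have htail : ∀ᵐ x ∂μ, ∀ i, μ[(∑ j ∈ S with i ≤ j, α j) * w|ℱ i] x ≤ μ[G|ℱ i] x :=
    ae_all_iff.2 fun i =>
      condExp_tail_mul_le_condExp_sum_mul_condExp hα hα0 hαw hαEw hw hw0 S i
  calc ∫⁻ x, (⨆ i, ENNReal.ofReal (μ[(∑ j ∈ S with i ≤ j, α j) * w|ℱ i] x)) ^ p ∂μ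
      ≤ ∫⁻ x, (⨆ i, ENNReal.ofReal (μ[G|ℱ i] x)) ^ p ∂μ :=
        lintegral_mono_ae (htail.mono fun x hx => ENNReal.rpow_le_rpow
          (iSup_mono fun i => ENNReal.ofReal_le_ofReal (hx i)) (by linarith))
    _ ≤ _ := lintegral_iSup_condExp_rpow_le hp (integrable_finsetSum' _ fun j _ => hαEw j) hG0 hGM
    _ = _ := by simp only [hG_apply]

end Filtration

end

/-- Principal lemma, direction `A₃ ≤ C A₁`: for `s > 1` there is a constant `C`
depending only on `s` such that for every σ-finite filtered measure space, every
bounded integrable nonnegative weight `w`, and nonnegative bounded adapted `α_i`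
with only finitely many nonzero,
`∫ (sup_i E_i(ᾱ_i w))^s dμ ≤ C ∫ (∑_i α_i E_i w)^s dμ`, where `ᾱ_i = ∑_{j ≥ i} α_j`. -/
theorem stmt_6 (s : ℝ) (hs : 1 < s) :
    ∃ C : ℝ, 0 < C ∧
      ∀ (Ω : Type) (m0 : MeasurableSpace Ω) (μ : Measure Ω), SigmaFinite μ →
      ∀ (ℱ : Filtration ℤ m0), (∀ i, SigmaFinite (μ.trim (ℱ.le i))) →
      ∀ w : Ω → ℝ, Measurable w → (∀ x, 0 ≤ w x) → (∃ M, ∀ x, w x ≤ M) →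
        Integrable w μ →
      ∀ α : ℤ → Ω → ℝ, (∀ i, Measurable[ℱ i] (α i)) → (∀ i x, 0 ≤ α i x) →
        (∀ i, ∃ M, ∀ x, α i x ≤ M) → {i | α i ≠ 0}.Finite →
      (∫⁻ x, (⨆ i : ℤ,
          ENNReal.ofReal ((μ[fun y => (∑' j : {j : ℤ // i ≤ j}, α j.1 y) * w y|ℱ i]) x)) ^ s ∂μ)
        ≤ ENNReal.ofReal C *
          ∫⁻ x, ENNReal.ofReal ((∑' i : ℤ, α i x * (μ[w|ℱ i]) x) ^ s) ∂μ := by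
  refine ⟨(s / (s - 1)) ^ s, Real.rpow_pos_of_pos (div_pos (by linarith) (by linarith)) _, ?_⟩
  intro Ω m0 μ _ ℱ hℱ w _ hw0 ⟨M, hwM⟩ hw α hα hα0 hαb hfin
  have : SigmaFiniteFiltration μ ℱ := ⟨hℱ⟩
  set S := hfin.toFinset
  have hαS : ∀ j ∉ S, α j = 0 := fun j hj => by simpa [S] using hj
  have htail : ∀ i, (fun y => (∑' j : {j : ℤ // i ≤ j}, α j.1 y) * w y) =
      (∑ j ∈ S with i ≤ j, α j) * w := fun i => by
    ext y
    rw [Pi.mul_apply, Finset.sum_apply, Finset.sum_filter]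
    congr 1
    refine (tsum_subtype {j | i ≤ j} fun j => α j y).trans ((tsum_eq_sum fun j hj => ?_).trans
      (Finset.sum_congr rfl fun j _ => ?_))
    · simp [hαS j hj]
    · simp [Set.indicator_apply]
  have hsum : ∀ x, ∑' i, α i x * μ[w|ℱ i] x = ∑ j ∈ S, α j x * μ[w|ℱ j] x := fun x =>
    tsum_eq_sum fun j hj => by simp [hαS j hj]
  simp only [htail, hsum]
  exact lintegral_iSup_condExp_tail_mul_rpow_le hs (fun j => (hα j).stronglyMeasurable)
    hα0 (fun j => (hαb j).imp fun _ h => ae_of_all _ h) hw (ae_of_all _ hw0)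
    (ae_of_all _ hwM) S
end

section
/- (Carleson embedding, sufficiency) Let $(\Omega,\mathcal{F},\mu;(\mathcal{F}_i)_{i\in\mathbb{N}})$ be a $\sigma$-finite filtered measure space, $\theta \geq 1$, $p \in (0,\infty)$, and for each $i$ let $\nu_i$ be a measure on $\mathcal{F}_i$ and $f_i$ a nonnegative $\mathcal{F}_i$-measurable function. Suppose there is $C_0 > 0$ such that $\sum_{j\geq i} \nu_j(E) \leq C_0\, \mu(E)^\theta$ for all $E \in \mathcal{F}_i$ and all $i$. Then $\big(\sum_i \int_\Omega f_i^{p\theta}\, d\nu_i\big)^{1/(p\theta)} \leq (C_0\theta)^{1/(p\theta)} \|f^*\|_{L^p(d\mu)}$, where $f^* := \sup_i f_i$. -/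
open MeasureTheory Set
open scoped ENNReal

/-!
Stopping `f` at the first time `τ` it exceeds `t` splits `{f^* > t}` into the sets
`{τ = k} ∈ ℱ k`. The Carleson condition applied to each of them, together with
`∑ a_k^θ ≤ (∑ a_k)^θ`, gives `∑_i ν_i {f_i > t} ≤ C₀ μ {f^* > t}^θ`. Integrating this against
`pθ t^(pθ-1) dt` (layer cake) and spending Chebyshev's bound `t^p μ {f^* > t} ≤ ‖f^*‖_p^p` on
`θ - 1` of the `θ` factors gives `∑_i ∫ f_i^(pθ) dν_i ≤ C₀ θ ‖f^*‖_p^(pθ)`.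
-/

namespace ENNReal

lemma mul_rpow_sub_one (a : ℝ≥0∞) {θ : ℝ} (hθ : 1 ≤ θ) : a * a ^ (θ - 1) = a ^ θ := by
  simpa using (rpow_add_of_nonneg (x := a) 1 (θ - 1) zero_le_one (sub_nonneg.2 hθ)).symm

lemma tsum_rpow_le_rpow_tsum {ι : Type*} (a : ι → ℝ≥0∞) {θ : ℝ} (hθ : 1 ≤ θ) :
    ∑' k, a k ^ θ ≤ (∑' k, a k) ^ θ :=
  calc ∑' k, a k ^ θ ≤ ∑' k, a k * (∑' k, a k) ^ (θ - 1) := by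
        gcongr with k
        rw [← mul_rpow_sub_one _ hθ]
        gcongr
        exact ENNReal.le_tsum k
    _ = (∑' k, a k) ^ θ := by rw [ENNReal.tsum_mul_right, mul_rpow_sub_one _ hθ]

end ENNReal

section LayerCake

variable {α : Type*} {m : MeasurableSpace α} (μ : Measure α) {F : α → ℝ≥0∞}

lemma measurable_measure_ofReal_lt (F : α → ℝ≥0∞) :
    Measurable fun t : ℝ => μ {x | ENNReal.ofReal t < F x} :=
  Antitone.measurable fun _ _ hst => measure_mono fun _ hx =>
    (ENNReal.ofReal_le_ofReal hst).trans_lt hx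

lemma lintegral_rpow_eq_lintegral_meas_ofReal_lt_mul (hF : AEMeasurable F μ)
    (hF_fin : ∀ᵐ x ∂μ, F x ≠ ∞) {p : ℝ} (hp : 0 < p) :
    ∫⁻ x, F x ^ p ∂μ = ENNReal.ofReal p *
      ∫⁻ t in Ioi 0, μ {x | ENNReal.ofReal t < F x} * ENNReal.ofReal (t ^ (p - 1)) := by
  have hcake := lintegral_rpow_eq_lintegral_meas_lt_mul μ
    (Filter.Eventually.of_forall fun _ => ENNReal.toReal_nonneg) hF.ennreal_toReal hp
  convert hcake using 1
  · refine lintegral_congr_ae ?_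
    filter_upwards [hF_fin] with x hx
    rw [← ENNReal.ofReal_rpow_of_nonneg ENNReal.toReal_nonneg hp.le, ENNReal.ofReal_toReal hx]
  · refine congrArg _ (setLIntegral_congr_fun measurableSet_Ioi fun t ht => ?_)
    congr 1
    refine measure_congr ?_
    filter_upwards [hF_fin] with x hx
    exact propext (ENNReal.ofReal_lt_iff_lt_toReal (le_of_lt ht) hx)

lemma rpow_mul_meas_lt_le_lintegral_rpow (hF : AEMeasurable F μ) {p : ℝ} (hp : 0 ≤ p)
    (s : ℝ≥0∞) : s ^ p * μ {x | s < F x} ≤ ∫⁻ x, F x ^ p ∂μ :=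
  calc s ^ p * μ {x | s < F x} ≤ s ^ p * μ {x | s ^ p ≤ F x ^ p} := by
        gcongr
        exact fun hx => ENNReal.rpow_le_rpow hx.le hp
    _ ≤ ∫⁻ x, F x ^ p ∂μ := mul_meas_ge_le_lintegral₀ (hF.pow_const p) _

lemma lintegral_meas_ofReal_lt_rpow_mul_le (hF : AEMeasurable F μ) {p θ : ℝ} (hp : 0 < p)
    (hθ : 1 ≤ θ) :
    ENNReal.ofReal (p * θ) *
        ∫⁻ t in Ioi 0, μ {x | ENNReal.ofReal t < F x} ^ θ * ENNReal.ofReal (t ^ (p * θ - 1))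
      ≤ ENNReal.ofReal θ * (∫⁻ x, F x ^ p ∂μ) ^ θ := by
  set A := ∫⁻ x, F x ^ p ∂μ
  by_cases hA : A = ∞
  · rw [hA, ENNReal.top_rpow_of_pos (by linarith), ENNReal.mul_top (ENNReal.ofReal_pos.2 (by linarith)).ne']
    exact le_top
  have hF_fin : ∀ᵐ x ∂μ, F x ≠ ∞ := by
    filter_upwards [ae_lt_top' (hF.pow_const p) hA] with x hx hxtop
    simp [hxtop, ENNReal.top_rpow_of_pos hp] at hx
  have hpoint : ∀ t ∈ Ioi (0 : ℝ),
      μ {x | ENNReal.ofReal t < F x} ^ θ * ENNReal.ofReal (t ^ (p * θ - 1))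
        ≤ A ^ (θ - 1) * (μ {x | ENNReal.ofReal t < F x} * ENNReal.ofReal (t ^ (p - 1))) := by
    intro t ht
    set m := μ {x | ENNReal.ofReal t < F x}
    have hsplit : ENNReal.ofReal (t ^ (p * θ - 1))
        = ENNReal.ofReal (t ^ (p - 1)) * (ENNReal.ofReal t ^ p) ^ (θ - 1) := by
      rw [← ENNReal.rpow_mul, ENNReal.ofReal_rpow_of_pos ht, ← ENNReal.ofReal_mul
        (Real.rpow_nonneg ht.le _), ← Real.rpow_add ht]
      ring_nf
    calc m ^ θ * ENNReal.ofReal (t ^ (p * θ - 1))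
        = (ENNReal.ofReal t ^ p * m) ^ (θ - 1) * (m * ENNReal.ofReal (t ^ (p - 1))) := by
          rw [hsplit, ENNReal.mul_rpow_of_nonneg _ _ (by linarith),
            ← ENNReal.mul_rpow_sub_one m hθ]
          ring
      _ ≤ A ^ (θ - 1) * (m * ENNReal.ofReal (t ^ (p - 1))) := by
          gcongr
          exact rpow_mul_meas_lt_le_lintegral_rpow μ hF hp.le _
  calc ENNReal.ofReal (p * θ) *
        ∫⁻ t in Ioi 0, μ {x | ENNReal.ofReal t < F x} ^ θ * ENNReal.ofReal (t ^ (p * θ - 1))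
      ≤ ENNReal.ofReal (p * θ) * ∫⁻ t in Ioi 0,
          A ^ (θ - 1) * (μ {x | ENNReal.ofReal t < F x} * ENNReal.ofReal (t ^ (p - 1))) := by
        gcongr 1
        exact setLIntegral_mono' measurableSet_Ioi hpoint
    _ = ENNReal.ofReal θ * A ^ (θ - 1) * (ENNReal.ofReal p *
          ∫⁻ t in Ioi 0, μ {x | ENNReal.ofReal t < F x} * ENNReal.ofReal (t ^ (p - 1))) := by
        rw [lintegral_const_mul' _ _ (ENNReal.rpow_ne_top_of_nonneg (by linarith) hA),
          ENNReal.ofReal_mul hp.le]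
        ring
    _ = ENNReal.ofReal θ * A ^ θ := by
        rw [← lintegral_rpow_eq_lintegral_meas_ofReal_lt_mul μ hF hF_fin hp, mul_assoc,
          mul_comm (A ^ _), ENNReal.mul_rpow_sub_one A hθ]

end LayerCake

section Carleson

variable {Ω : Type*} {m0 : MeasurableSpace Ω} (μ : Measure Ω) (ℱ : Filtration ℕ m0)
  (ν : (i : ℕ) → @Measure Ω (ℱ i)) {θ : ℝ} (C : ℝ≥0∞)

lemma measurableSet_disjointed_of_adapted {A : ℕ → Set Ω} (hA : ∀ i, MeasurableSet[ℱ i] (A i))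
    (k : ℕ) : MeasurableSet[ℱ k] (disjointed A k) := by
  rw [disjointed_eq_inter_compl]
  exact (hA k).inter <| .iInter fun j => .iInter fun hj => (ℱ.mono hj.le _ (hA j)).compl

-- `disjointed {s < g ·} k` is the level set `{τ = k}` of the first time `τ` at which `g`
-- exceeds `s`.
lemma tsum_measure_lt_le_of_carleson (hθ : 1 ≤ θ) {g : ℕ → Ω → ℝ≥0∞}
    (hg : ∀ i, Measurable[ℱ i] (g i))
    (hcarleson : ∀ (i : ℕ) (E : Set Ω), MeasurableSet[ℱ i] E →
      (∑' j : ℕ, if i ≤ j then ν j E else 0) ≤ C * μ E ^ θ) (s : ℝ≥0∞) :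
    ∑' i, ν i {x | s < g i x} ≤ C * μ {x | s < ⨆ i, g i x} ^ θ := by
  set A : ℕ → Set Ω := fun i => {x | s < g i x}
  have hG := measurableSet_disjointed_of_adapted ℱ
    (A := A) fun i => measurableSet_lt measurable_const (hg i)
  have hcover : ∀ i, ν i (A i) ≤ ∑' k, if k ≤ i then ν i (disjointed A k) else 0 := by
    intro i
    calc ν i (A i) ≤ ν i (⋃ k ∈ Finset.Iic i, disjointed A k) := by
          rw [biUnion_Iic_disjointed]
          exact measure_mono (le_partialSups A i)
      _ ≤ ∑ k ∈ Finset.Iic i, ν i (disjointed A k) := measure_biUnion_finset_le _ _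
      _ = ∑' k, if k ≤ i then ν i (disjointed A k) else 0 := by
          rw [sum_eq_tsum_indicator]
          simp [Set.indicator_apply]
  calc ∑' i, ν i (A i)
      ≤ ∑' k, ∑' i, if k ≤ i then ν i (disjointed A k) else 0 := by
        rw [ENNReal.tsum_comm]
        exact ENNReal.tsum_le_tsum hcover
    _ ≤ ∑' k, C * μ (disjointed A k) ^ θ :=
        ENNReal.tsum_le_tsum fun k => hcarleson k _ (hG k)
    _ ≤ C * (∑' k, μ (disjointed A k)) ^ θ := by
        rw [ENNReal.tsum_mul_left]
        gcongr
        exact ENNReal.tsum_rpow_le_rpow_tsum _ hθ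
    _ = C * μ {x | s < ⨆ i, g i x} ^ θ := by
        rw [← measure_iUnion (disjoint_disjointed A) fun k => ℱ.le k _ (hG k),
          iUnion_disjointed]
        congr
        ext x
        simp [A, lt_iSup_iff]

lemma tsum_lintegral_rpow_le_of_carleson {p : ℝ} (hp : 0 < p) (hθ : 1 ≤ θ)
    {g : ℕ → Ω → ℝ≥0∞} (hg : ∀ i, Measurable[ℱ i] (g i)) (hg_fin : ∀ i, ∀ᵐ x ∂ν i, g i x ≠ ∞)
    (hcarleson : ∀ (i : ℕ) (E : Set Ω), MeasurableSet[ℱ i] E →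
      (∑' j : ℕ, if i ≤ j then ν j E else 0) ≤ C * μ E ^ θ) :
    ∑' i, ∫⁻ x, g i x ^ (p * θ) ∂ν i
      ≤ C * ENNReal.ofReal θ * (∫⁻ x, (⨆ i, g i x) ^ p ∂μ) ^ θ := by
  have hq : 0 < p * θ := mul_pos hp (by linarith)
  have hF : Measurable fun x => ⨆ i, g i x := .iSup fun i => (hg i).mono (ℱ.le i) le_rfl
  have hmeas_ν : ∀ i, Measurable fun t : ℝ =>
      ν i {x | ENNReal.ofReal t < g i x} * ENNReal.ofReal (t ^ (p * θ - 1)) :=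
    fun i => (measurable_measure_ofReal_lt (ν i) (g i)).mul (by fun_prop)
  have hmeas_μ : Measurable fun t : ℝ =>
      μ {x | ENNReal.ofReal t < ⨆ i, g i x} ^ θ * ENNReal.ofReal (t ^ (p * θ - 1)) :=
    ((measurable_measure_ofReal_lt μ _).pow_const θ).mul (by fun_prop)
  calc ∑' i, ∫⁻ x, g i x ^ (p * θ) ∂ν i
      = ∑' i, ENNReal.ofReal (p * θ) * ∫⁻ t in Ioi 0,
          ν i {x | ENNReal.ofReal t < g i x} * ENNReal.ofReal (t ^ (p * θ - 1)) :=
        tsum_congr fun i => lintegral_rpow_eq_lintegral_meas_ofReal_lt_mul (ν i)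
          (hg i).aemeasurable (hg_fin i) hq
    _ = ENNReal.ofReal (p * θ) * ∫⁻ t in Ioi 0,
          (∑' i, ν i {x | ENNReal.ofReal t < g i x}) * ENNReal.ofReal (t ^ (p * θ - 1)) := by
        rw [ENNReal.tsum_mul_left, ← lintegral_tsum fun i => (hmeas_ν i).aemeasurable]
        simp_rw [ENNReal.tsum_mul_right]
    _ ≤ ENNReal.ofReal (p * θ) * ∫⁻ t in Ioi 0, C *
          μ {x | ENNReal.ofReal t < ⨆ i, g i x} ^ θ * ENNReal.ofReal (t ^ (p * θ - 1)) := by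
        gcongr with t
        exact tsum_measure_lt_le_of_carleson μ ℱ ν C hθ hg hcarleson _
    _ = C * (ENNReal.ofReal (p * θ) * ∫⁻ t in Ioi 0,
          μ {x | ENNReal.ofReal t < ⨆ i, g i x} ^ θ * ENNReal.ofReal (t ^ (p * θ - 1))) := by
        simp only [mul_assoc C]
        rw [lintegral_const_mul _ hmeas_μ]
        ring
    _ ≤ C * ENNReal.ofReal θ * (∫⁻ x, (⨆ i, g i x) ^ p ∂μ) ^ θ := by
        rw [mul_assoc]
        gcongr C * ?_
        exact lintegral_meas_ofReal_lt_rpow_mul_le μ hF.aemeasurable hp hθ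

end Carleson

theorem stmt_7_general {Ω : Type*} {m0 : MeasurableSpace Ω} (μ : Measure Ω)
    (ℱ : Filtration ℕ m0) (θ : ℝ) (hθ : 1 ≤ θ) (p : ℝ) (hp : 0 < p)
    (ν : (i : ℕ) → @Measure Ω (ℱ i)) (f : ℕ → Ω → ℝ)
    (hf_meas : ∀ i, Measurable[ℱ i] (f i))
    (C₀ : ℝ)
    (hcarleson : ∀ (i : ℕ) (E : Set Ω), MeasurableSet[ℱ i] E →
      (∑' j : ℕ, if i ≤ j then ν j E else 0) ≤ ENNReal.ofReal C₀ * μ E ^ θ) :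
    (∑' i : ℕ, ∫⁻ x, ENNReal.ofReal (f i x) ^ (p * θ) ∂(ν i)) ^ (1 / (p * θ))
      ≤ ENNReal.ofReal (C₀ * θ) ^ (1 / (p * θ)) *
        (∫⁻ x, (⨆ i : ℕ, ENNReal.ofReal (f i x)) ^ p ∂μ) ^ (1 / p) := by
  have hθ₀ : 0 < θ := by linarith
  have hsum := tsum_lintegral_rpow_le_of_carleson μ ℱ ν _ hp hθ
    (fun i => (hf_meas i).ennreal_ofReal) (fun i => ae_of_all _ fun _ => ENNReal.ofReal_ne_top)
    hcarleson
  calc _ ≤ (ENNReal.ofReal C₀ * ENNReal.ofReal θ *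
          (∫⁻ x, (⨆ i, ENNReal.ofReal (f i x)) ^ p ∂μ) ^ θ) ^ (1 / (p * θ)) := by
        gcongr
    _ = _ := by
        rw [← ENNReal.ofReal_mul' hθ₀.le, ENNReal.mul_rpow_of_nonneg _ _ (by positivity),
          ← ENNReal.rpow_mul]
        congr 2
        field_simp

/-- Carleson embedding theorem, sufficiency: if the measures `ν_i` on `F_i` satisfy
`∑_{j ≥ i} ν_j(E) ≤ C₀ μ(E)^θ` for all `E ∈ F_i`, then for every family of nonnegative
adapted functions `f_i`,
`(∑_i ∫ f_i^{pθ} dν_i)^{1/(pθ)} ≤ (C₀ θ)^{1/(pθ)} ‖sup_i f_i‖_{L^p(μ)}`. -/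
theorem stmt_7 {Ω : Type*} {m0 : MeasurableSpace Ω} (μ : Measure Ω) [SigmaFinite μ]
    (ℱ : Filtration ℕ m0) (θ : ℝ) (hθ : 1 ≤ θ) (p : ℝ) (hp : 0 < p)
    (ν : (i : ℕ) → @Measure Ω (ℱ i)) (f : ℕ → Ω → ℝ)
    (hf_meas : ∀ i, Measurable[ℱ i] (f i)) (hf_nonneg : ∀ i x, 0 ≤ f i x)
    (C₀ : ℝ) (hC₀ : 0 < C₀)
    (hcarleson : ∀ (i : ℕ) (E : Set Ω), MeasurableSet[ℱ i] E →
      (∑' j : ℕ, if i ≤ j then ν j E else 0) ≤ ENNReal.ofReal C₀ * μ E ^ θ) :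
    (∑' i : ℕ, ∫⁻ x, ENNReal.ofReal (f i x) ^ (p * θ) ∂(ν i)) ^ (1 / (p * θ))
      ≤ ENNReal.ofReal (C₀ * θ) ^ (1 / (p * θ)) *
        (∫⁻ x, (⨆ i : ℕ, ENNReal.ofReal (f i x)) ^ p ∂μ) ^ (1 / p) :=
  stmt_7_general μ ℱ θ hθ p hp ν f hf_meas C₀ hcarleson
end

section
/- Let $1 < p < \infty$, $(\Omega,\mathcal{F},\mu;(\mathcal{F}_i)_{i\in\mathbb{Z}})$ a $\sigma$-finite filtered measure space, $w$ a weight, and $\sigma := w^{1-p'}$ also a weight. If there exists $C_2 > 0$ such that $\int_E \big(\sup_{j\geq i}\mathcal{E}_j\sigma\big)^p w\,d\mu \leq C_2^p \int_E \sigma\,d\mu$ for all $E \in \mathcal{F}_i$ of finite measure and all $i$, then $\sup_i \big\|(\mathcal{E}_i w)(\mathcal{E}_i\sigma)^{p-1}\big\|_{L^\infty(d\mu)} \leq C_2^p$. -/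
/-!
Write `F = 𝓔ᵢ σ` and `G = 𝓔ᵢ w`. For `E ∈ ℱᵢ`, self-adjointness of `𝓔ᵢ` turns `∫_E F^p w` into
`∫_E F^p G` and `∫_E σ` into `∫_E F`; since the supremum dominates its `j = i` term, the testing
condition gives `∫_E F^p G ≤ C₂^p ∫_E F`. Both integrands are `ℱᵢ`-measurable, so
`F^p G ≤ C₂^p F` a.e., and dividing by `F` where it is positive gives `G F^(p-1) ≤ C₂^p`.
Working with lower Lebesgue integrals means that `F^p w` never has to be integrable.
-/

open MeasureTheory
open scoped ENNReal

namespace MeasureTheory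

variable {Ω : Type*} {m m0 : MeasurableSpace Ω} {μ : Measure Ω}

theorem setLIntegral_mul_ofReal_condExp (hm : m ≤ m0) [SigmaFinite (μ.trim hm)] {f : Ω → ℝ}
    (hf : Integrable f μ) (hf_nonneg : 0 ≤ᵐ[μ] f) {g : Ω → ℝ≥0∞} (hg : Measurable[m] g)
    {s : Set Ω} (hs : MeasurableSet[m] s) :
    ∫⁻ x in s, g x * ENNReal.ofReal (μ[f|m] x) ∂μ = ∫⁻ x in s, g x * ENNReal.ofReal (f x) ∂μ := by
  have h_trim : (μ.withDensity fun x ↦ ENNReal.ofReal (μ[f|m] x)).trim hm =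
      (μ.withDensity fun x ↦ ENNReal.ofReal (f x)).trim hm := by
    refine @Measure.ext _ m _ _ fun t ht ↦ ?_
    rw [trim_measurableSet_eq hm ht, trim_measurableSet_eq hm ht, withDensity_apply _ (hm t ht),
      withDensity_apply _ (hm t ht),
      ← ofReal_integral_eq_lintegral_ofReal integrable_condExp.integrableOn
        (ae_restrict_of_ae (condExp_nonneg hf_nonneg)),
      ← ofReal_integral_eq_lintegral_ofReal hf.integrableOn (ae_restrict_of_ae hf_nonneg),
      setIntegral_condExp hm hf ht]
  have h_density {d : Ω → ℝ≥0∞} (hd : AEMeasurable d μ) :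
      ∫⁻ x in s, g x * d x ∂μ = ∫⁻ x in s, g x ∂(μ.withDensity d).trim hm := by
    rw [restrict_trim hm _ hs, lintegral_trim hm hg,
      setLIntegral_withDensity_eq_lintegral_mul₀ hd (hg.mono hm le_rfl).aemeasurable (hm s hs)]
    simp only [Pi.mul_apply, mul_comm]
  rw [h_density (stronglyMeasurable_condExp.measurable.mono hm le_rfl).ennreal_ofReal.aemeasurable,
    h_density hf.aemeasurable.ennreal_ofReal, h_trim]

theorem ae_le_of_forall_setLIntegral_le_of_sigmaFinite_trim (hm : m ≤ m0)
    [SigmaFinite (μ.trim hm)] {f g : Ω → ℝ≥0∞} (hf : Measurable[m] f) (hg : Measurable[m] g)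
    (h : ∀ s, MeasurableSet[m] s → μ s < ∞ → ∫⁻ x in s, f x ∂μ ≤ ∫⁻ x in s, g x ∂μ) :
    f ≤ᵐ[μ] g := by
  refine ae_le_of_ae_le_trim (ae_le_of_forall_setLIntegral_le_of_sigmaFinite hf fun s hs hμs ↦ ?_)
  rw [restrict_trim hm μ hs, lintegral_trim hm hf, lintegral_trim hm hg]
  exact h s hs (trim_measurableSet_eq hm hs ▸ hμs)

end MeasureTheory

theorem mul_rpow_sub_one_le_of_ofReal_rpow_mul_le {a b c p : ℝ} (hp : 1 < p) (ha : 0 ≤ a)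
    (hc : 0 ≤ c)
    (h : ENNReal.ofReal a ^ p * ENNReal.ofReal b ≤ ENNReal.ofReal c * ENNReal.ofReal a) :
    b * a ^ (p - 1) ≤ c := by
  rcases ha.eq_or_lt with rfl | ha
  · simp [Real.zero_rpow (by linarith : p - 1 ≠ 0), hc]
  rw [ENNReal.ofReal_rpow_of_nonneg ha.le (by linarith), ← ENNReal.ofReal_mul (by positivity),
    ← ENNReal.ofReal_mul hc, ENNReal.ofReal_le_ofReal_iff (by positivity)] at h
  rw [Real.rpow_sub_one ha.ne', ← mul_div_assoc, div_le_iff₀ ha, mul_comm]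
  exact h

theorem stmt_12_general {Ω : Type*} {m0 : MeasurableSpace Ω} (μ : Measure Ω)
    (ℱ : Filtration ℤ m0) [∀ i, SigmaFinite (μ.trim (ℱ.le i))]
    (p : ℝ) (hp : 1 < p)
    (w σ : Ω → ℝ) (hw_nonneg : ∀ x, 0 ≤ w x)
    (hσ_def : ∀ x, σ x = w x ^ (1 - p / (p - 1)))
    (C₂ : ℝ) (hC₂ : 0 < C₂)
    (htest : ∀ (i : ℤ) (E : Set Ω), MeasurableSet[ℱ i] E → μ E < ∞ →
      (∫⁻ x in E, (⨆ j : ℤ, ⨆ _ : i ≤ j, ENNReal.ofReal ((μ[σ|ℱ j]) x)) ^ p *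
          ENNReal.ofReal (w x) ∂μ)
        ≤ ENNReal.ofReal (C₂ ^ p) * ∫⁻ x in E, ENNReal.ofReal (σ x) ∂μ) :
    ∀ i : ℤ, ∀ᵐ x ∂μ, (μ[w|ℱ i]) x * ((μ[σ|ℱ i]) x) ^ (p - 1) ≤ C₂ ^ p := by
  intro i
  have hCp : 0 < C₂ ^ p := Real.rpow_pos_of_pos hC₂ p
  -- `μ[f|m]` is `0` for non-integrable `f`, so those cases are trivial.
  by_cases hσI : Integrable σ μ
  swap
  · simp [condExp_of_not_integrable hσI, Real.zero_rpow (sub_ne_zero.mpr hp.ne'), hCp.le]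
  by_cases hwI : Integrable w μ
  swap
  · simp [condExp_of_not_integrable hwI, hCp.le]
  have hσ_nonneg : 0 ≤ᵐ[μ] σ := .of_forall fun x ↦ hσ_def x ▸ Real.rpow_nonneg (hw_nonneg x) _
  have hF_meas : Measurable[ℱ i] fun x ↦ ENNReal.ofReal (μ[σ|ℱ i] x) :=
    stronglyMeasurable_condExp.measurable.ennreal_ofReal
  have hG_meas : Measurable[ℱ i] fun x ↦ ENNReal.ofReal (μ[w|ℱ i] x) :=
    stronglyMeasurable_condExp.measurable.ennreal_ofReal
  have h_test_i (E : Set Ω) (hE : MeasurableSet[ℱ i] E) (hμE : μ E < ∞) :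
      ∫⁻ x in E, ENNReal.ofReal (μ[σ|ℱ i] x) ^ p * ENNReal.ofReal (μ[w|ℱ i] x) ∂μ ≤
        ∫⁻ x in E, ENNReal.ofReal (C₂ ^ p) * ENNReal.ofReal (μ[σ|ℱ i] x) ∂μ := by
    have h_σ := setLIntegral_mul_ofReal_condExp (ℱ.le i) hσI hσ_nonneg measurable_const hE (g := 1)
    simp only [Pi.one_apply, one_mul] at h_σ
    rw [setLIntegral_mul_ofReal_condExp (ℱ.le i) hwI (.of_forall hw_nonneg)
      (hF_meas.pow_const p) hE, lintegral_const_mul _ (hF_meas.mono (ℱ.le i) le_rfl), h_σ]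
    refine le_trans (lintegral_mono fun x ↦ ?_) (htest i E hE hμE)
    gcongr
    exact le_iSup₂_of_le (f := fun j (_ : i ≤ j) ↦ ENNReal.ofReal (μ[σ|ℱ j] x)) i le_rfl le_rfl
  filter_upwards [ae_le_of_forall_setLIntegral_le_of_sigmaFinite_trim (ℱ.le i)
    ((hF_meas.pow_const p).mul hG_meas) (hF_meas.const_mul _) h_test_i,
    condExp_nonneg (m := ℱ i) hσ_nonneg] with x hx hFx
  exact mul_rpow_sub_one_le_of_ofReal_rpow_mul_le hp hFx hCp.le hx

/-- Testing condition implies the martingale `A_p` condition: if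
`∫_E (sup_{j ≥ i} E_j σ)^p w dμ ≤ C₂^p ∫_E σ dμ` for all `E ∈ F_i` of finite measure,
then `(E_i w)(E_i σ)^{p-1} ≤ C₂^p` a.e. for every `i`, where `σ = w^{1-p'}`. -/
theorem stmt_12 {Ω : Type*} {m0 : MeasurableSpace Ω} (μ : Measure Ω) [SigmaFinite μ]
    (ℱ : Filtration ℤ m0) [∀ i, SigmaFinite (μ.trim (ℱ.le i))]
    (p : ℝ) (hp : 1 < p)
    (w σ : Ω → ℝ) (hw_meas : Measurable w) (hw_nonneg : ∀ x, 0 ≤ w x)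
    (hw_int : ∀ (i : ℤ) (s : Set Ω), MeasurableSet[ℱ i] s → μ s < ∞ → IntegrableOn w s μ)
    (hσ_def : ∀ x, σ x = w x ^ (1 - p / (p - 1)))
    (hσ_int : ∀ (i : ℤ) (s : Set Ω), MeasurableSet[ℱ i] s → μ s < ∞ → IntegrableOn σ s μ)
    (C₂ : ℝ) (hC₂ : 0 < C₂)
    (htest : ∀ (i : ℤ) (E : Set Ω), MeasurableSet[ℱ i] E → μ E < ∞ →
      (∫⁻ x in E, (⨆ j : ℤ, ⨆ _ : i ≤ j, ENNReal.ofReal ((μ[σ|ℱ j]) x)) ^ p *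
          ENNReal.ofReal (w x) ∂μ)
        ≤ ENNReal.ofReal (C₂ ^ p) * ∫⁻ x in E, ENNReal.ofReal (σ x) ∂μ) :
    ∀ i : ℤ, ∀ᵐ x ∂μ, (μ[w|ℱ i]) x * ((μ[σ|ℱ i]) x) ^ (p - 1) ≤ C₂ ^ p :=
  stmt_12_general μ ℱ p hp w σ hw_nonneg hσ_def C₂ hC₂ htest
end

section
/- (Principal set construction: sparseness) Let $(\Omega,\mathcal{F},\mu;(\mathcal{F}_i)_{i\in\mathbb{Z}})$ be a $\sigma$-finite filtered measure space, $\sigma$ a weight, $i \in \mathbb{Z}$, $k \in \mathbb{Z}$, and $P_0 \in \mathcal{F}_i$ with $0 < \mu(P_0) < \infty$ such that $2^{k-1} < \mathcal{E}_i[1_{P_0}\sigma] \leq 2^k$ on $P_0$. Define the stopping time $\tau := \inf\{j \geq i : \mathcal{E}_j[1_{P_0}\sigma] > 2^{k+1}\}$. Then $\mu(P_0 \cap \{\tau < \infty\}) \leq \tfrac{1}{2}\mu(P_0)$, hence $\mu(P_0) \leq 2\,\mu(P_0 \setminus \{\tau < \infty\})$. -/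
/-!
Put `f = 1_{P₀} σ`. The process `j ↦ 𝔼_j f` is a martingale, so Doob's weak-type (1,1) inequality
bounds `2^{k+1} μ{τ < ∞}` by `∫ f`, and `∫ f = ∫_{P₀} 𝔼_i f ≤ 2^k μ(P₀)` because `P₀ ∈ ℱ_i`.
The weak-type inequality is proved by splitting `{τ < ∞}` into the sets `{τ = j}`, each of which
lies in `ℱ_j`, so that `2^{k+1} μ{τ = j} ≤ ∫_{τ = j} 𝔼_j f = ∫_{τ = j} f`.
-/

open Set
open scoped ENNReal

namespace MeasureTheory

variable {Ω : Type*} {m m0 : MeasurableSpace Ω} {μ : Measure Ω} {f : Ω → ℝ}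

theorem setLIntegral_ofReal_condExp (hm : m ≤ m0) [SigmaFinite (μ.trim hm)]
    (hf : Integrable f μ) (hf_nonneg : 0 ≤ᵐ[μ] f) {s : Set Ω} (hs : MeasurableSet[m] s) :
    ∫⁻ x in s, ENNReal.ofReal (μ[f|m] x) ∂μ = ∫⁻ x in s, ENNReal.ofReal (f x) ∂μ := by
  rw [← setLIntegral_condLExp hm μ (fun x => ENNReal.ofReal (f x)) hs]
  exact lintegral_congr_ae <| (ae_restrict_of_ae (condLExp_ofReal m hf hf_nonneg)).mono
    fun _ h => h.symm

theorem ofReal_mul_measure_le_setLIntegral_of_le_condExp (hm : m ≤ m0) [SigmaFinite (μ.trim hm)]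
    (hf : Integrable f μ) (hf_nonneg : 0 ≤ᵐ[μ] f) {s : Set Ω} (hs : MeasurableSet[m] s)
    {c : ℝ} (hc : ∀ x ∈ s, c ≤ μ[f|m] x) :
    ENNReal.ofReal c * μ s ≤ ∫⁻ x in s, ENNReal.ofReal (f x) ∂μ := calc
  ENNReal.ofReal c * μ s = ∫⁻ _ in s, ENNReal.ofReal c ∂μ := (setLIntegral_const _ _).symm
  _ ≤ ∫⁻ x in s, ENNReal.ofReal (μ[f|m] x) ∂μ :=
    setLIntegral_mono' (hm s hs) fun x hx => ENNReal.ofReal_le_ofReal (hc x hx)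
  _ = ∫⁻ x in s, ENNReal.ofReal (f x) ∂μ := setLIntegral_ofReal_condExp hm hf hf_nonneg hs

theorem setLIntegral_ofReal_le_of_condExp_le (hm : m ≤ m0) [SigmaFinite (μ.trim hm)]
    (hf : Integrable f μ) (hf_nonneg : 0 ≤ᵐ[μ] f) {s : Set Ω} (hs : MeasurableSet[m] s)
    {c : ℝ} (hc : ∀ᵐ x ∂μ, x ∈ s → μ[f|m] x ≤ c) :
    ∫⁻ x in s, ENNReal.ofReal (f x) ∂μ ≤ ENNReal.ofReal c * μ s := calc
  ∫⁻ x in s, ENNReal.ofReal (f x) ∂μ = ∫⁻ x in s, ENNReal.ofReal (μ[f|m] x) ∂μ :=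
    (setLIntegral_ofReal_condExp hm hf hf_nonneg hs).symm
  _ ≤ ∫⁻ _ in s, ENNReal.ofReal c ∂μ :=
    setLIntegral_mono_ae' (hm s hs) (hc.mono fun _ hx hxs => ENNReal.ofReal_le_ofReal (hx hxs))
  _ = ENNReal.ofReal c * μ s := setLIntegral_const _ _

theorem ofReal_mul_measure_exists_lt_condExp_le (ℱ : Filtration ℕ m0)
    [∀ n, SigmaFinite (μ.trim (ℱ.le n))] (hf : Integrable f μ) (hf_nonneg : 0 ≤ᵐ[μ] f) (c : ℝ) :
    ENNReal.ofReal c * μ {x | ∃ n, c < μ[f|ℱ n] x} ≤ ∫⁻ x, ENNReal.ofReal (f x) ∂μ := by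
  set A : ℕ → Set Ω := fun n => {x | c < μ[f|ℱ n] x}
  have hA : ∀ n, MeasurableSet[ℱ n] (A n) := fun n =>
    measurableSet_lt measurable_const stronglyMeasurable_condExp.measurable
  -- `disjointed A n` is the event that `n` is the first time `μ[f|ℱ n]` exceeds `c`
  have hB : ∀ n, MeasurableSet[ℱ n] (disjointed A n) := fun n => by
    rw [disjointed_eq_inter_compl]
    exact (hA n).inter <| .biInter (to_countable _) fun j hj => (ℱ.mono (le_of_lt hj) _ (hA j)).compl
  have hB₀ : ∀ n, MeasurableSet (disjointed A n) := fun n => ℱ.le n _ (hB n)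
  calc ENNReal.ofReal c * μ {x | ∃ n, c < μ[f|ℱ n] x}
      = ∑' n, ENNReal.ofReal c * μ (disjointed A n) := by
        rw [ofPred_exists, ← iUnion_disjointed, measure_iUnion (disjoint_disjointed A) hB₀,
          ENNReal.tsum_mul_left]
    _ ≤ ∑' n, ∫⁻ x in disjointed A n, ENNReal.ofReal (f x) ∂μ := ENNReal.tsum_le_tsum fun n =>
        ofReal_mul_measure_le_setLIntegral_of_le_condExp (ℱ.le n) hf hf_nonneg (hB n)
          fun x hx => (disjointed_subset A n hx).le
    _ = ∫⁻ x in ⋃ n, disjointed A n, ENNReal.ofReal (f x) ∂μ :=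
        (lintegral_iUnion hB₀ (disjoint_disjointed A) _).symm
    _ ≤ ∫⁻ x, ENNReal.ofReal (f x) ∂μ := setLIntegral_le_lintegral _ _

def Filtration.shiftNat (ℱ : Filtration ℤ m0) (i : ℤ) : Filtration ℕ m0 where
  seq n := ℱ (i + n)
  mono' _ _ hmn := ℱ.mono (by gcongr)
  le' n := ℱ.le (i + n)

theorem ofReal_mul_measure_exists_ge_lt_condExp_le (ℱ : Filtration ℤ m0)
    [∀ j, SigmaFinite (μ.trim (ℱ.le j))] (hf : Integrable f μ) (hf_nonneg : 0 ≤ᵐ[μ] f)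
    (i : ℤ) (c : ℝ) :
    ENNReal.ofReal c * μ {x | ∃ j, i ≤ j ∧ c < μ[f|ℱ j] x} ≤ ∫⁻ x, ENNReal.ofReal (f x) ∂μ := by
  have : ∀ n, SigmaFinite (μ.trim ((ℱ.shiftNat i).le n)) := fun n => inferInstanceAs
    (SigmaFinite (μ.trim (ℱ.le (i + n))))
  convert ofReal_mul_measure_exists_lt_condExp_le (ℱ.shiftNat i) hf hf_nonneg c using 3
  ext x
  refine ⟨fun ⟨j, hij, hj⟩ => ⟨(j - i).toNat, ?_⟩, fun ⟨n, hn⟩ => ⟨i + n, by omega, hn⟩⟩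
  change c < μ[f|ℱ (i + ((j - i).toNat : ℤ))] x
  rwa [show i + ((j - i).toNat : ℤ) = j by omega]

theorem measure_le_two_mul_measure_diff_of_inter_le_half {s t : Set Ω} (hs : μ s ≠ ∞)
    (h : μ (s ∩ t) ≤ μ s / 2) : μ s ≤ 2 * μ (s \ t) := by
  have hhalf : μ s / 2 + μ s / 2 ≤ μ s / 2 + μ (s \ t) := by
    rw [ENNReal.add_halves]
    exact (measure_le_inter_add_sdiff μ s t).trans (by gcongr)
  calc μ s = 2 * (μ s / 2) := (ENNReal.mul_div_cancel two_ne_zero ENNReal.ofNat_ne_top).symm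
    _ ≤ 2 * μ (s \ t) := by
      gcongr
      exact (ENNReal.add_le_add_iff_left (ENNReal.div_ne_top hs two_ne_zero)).1 hhalf

end MeasureTheory

open MeasureTheory

theorem stmt_19_general {Ω : Type*} {m0 : MeasurableSpace Ω} (μ : Measure Ω)
    (ℱ : Filtration ℤ m0) [∀ i, SigmaFinite (μ.trim (ℱ.le i))]
    (σ : Ω → ℝ) (hσ_nonneg : ∀ x, 0 ≤ σ x)
    (hσ_int : ∀ (i : ℤ) (s : Set Ω), MeasurableSet[ℱ i] s → μ s < ∞ → IntegrableOn σ s μ)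
    (i k : ℤ) (P₀ : Set Ω) (hP₀ : MeasurableSet[ℱ i] P₀)
    (hP₀fin : μ P₀ < ∞)
    (hbounds : ∀ᵐ x ∂μ, x ∈ P₀ →
      (2 : ℝ) ^ (k - 1) < (μ[P₀.indicator σ|ℱ i]) x ∧
        (μ[P₀.indicator σ|ℱ i]) x ≤ (2 : ℝ) ^ k) :
    μ (P₀ ∩ {x | ∃ j, i ≤ j ∧ (2 : ℝ) ^ (k + 1) < (μ[P₀.indicator σ|ℱ j]) x})
        ≤ μ P₀ / 2 ∧
      μ P₀ ≤ 2 *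
        μ (P₀ \ {x | ∃ j, i ≤ j ∧ (2 : ℝ) ^ (k + 1) < (μ[P₀.indicator σ|ℱ j]) x}) := by
  set S := {x | ∃ j, i ≤ j ∧ (2 : ℝ) ^ (k + 1) < (μ[P₀.indicator σ|ℱ j]) x}
  set c := ENNReal.ofReal ((2 : ℝ) ^ k)
  have hf : Integrable (P₀.indicator σ) μ :=
    (hσ_int i P₀ hP₀ hP₀fin).integrable_indicator (ℱ.le i P₀ hP₀)
  have hf_nonneg : 0 ≤ᵐ[μ] P₀.indicator σ := ae_of_all _ (indicator_nonneg fun x _ => hσ_nonneg x)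
  have hsupp : (fun x => ENNReal.ofReal (P₀.indicator σ x)).support ⊆ P₀ :=
    (Function.support_comp_subset ENNReal.ofReal_zero _).trans support_indicator_subset
  have hupper : ∫⁻ x, ENNReal.ofReal (P₀.indicator σ x) ∂μ ≤ c * μ P₀ := by
    rw [← setLIntegral_eq_of_support_subset hsupp]
    exact setLIntegral_ofReal_le_of_condExp_le (ℱ.le i) hf hf_nonneg hP₀
      (hbounds.mono fun x hx hxP => (hx hxP).2)
  have hweak : 2 * c * μ S ≤ ∫⁻ x, ENNReal.ofReal (P₀.indicator σ x) ∂μ := by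
    have h2c : 2 * c = ENNReal.ofReal ((2 : ℝ) ^ (k + 1)) := by
      rw [zpow_add_one₀ two_ne_zero, mul_comm, ENNReal.ofReal_mul (by positivity),
        ENNReal.ofReal_ofNat, mul_comm]
    rw [h2c]
    exact ofReal_mul_measure_exists_ge_lt_condExp_le ℱ hf hf_nonneg i _
  have hS : 2 * μ S ≤ μ P₀ := by
    have hc : c ≠ 0 := (ENNReal.ofReal_pos.2 (by positivity)).ne'
    rw [← ENNReal.mul_le_mul_iff_right hc ENNReal.ofReal_ne_top, ← mul_assoc, mul_comm c 2]
    exact hweak.trans hupper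
  have hfirst : μ (P₀ ∩ S) ≤ μ P₀ / 2 := (measure_mono inter_subset_right).trans <|
    (ENNReal.le_div_iff_mul_le (.inl two_ne_zero) (.inl ENNReal.ofNat_ne_top)).2
      (by rwa [mul_comm])
  exact ⟨hfirst, measure_le_two_mul_measure_diff_of_inter_le_half hP₀fin.ne hfirst⟩

/-- Principal set construction, sparseness: if `P₀ ∈ F_i` has `0 < μ(P₀) < ∞` and
`2^{k-1} < E_i[1_{P₀} σ] ≤ 2^k` on `P₀`, then the stopping set
`{τ < ∞} = {∃ j ≥ i, E_j[1_{P₀} σ] > 2^{k+1}}` satisfies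
`μ(P₀ ∩ {τ < ∞}) ≤ μ(P₀)/2`, hence `μ(P₀) ≤ 2 μ(P₀ \ {τ < ∞})`. -/
theorem stmt_19 {Ω : Type*} {m0 : MeasurableSpace Ω} (μ : Measure Ω) [SigmaFinite μ]
    (ℱ : Filtration ℤ m0) [∀ i, SigmaFinite (μ.trim (ℱ.le i))]
    (σ : Ω → ℝ) (hσ_meas : Measurable σ) (hσ_nonneg : ∀ x, 0 ≤ σ x)
    (hσ_int : ∀ (i : ℤ) (s : Set Ω), MeasurableSet[ℱ i] s → μ s < ∞ → IntegrableOn σ s μ)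
    (i k : ℤ) (P₀ : Set Ω) (hP₀ : MeasurableSet[ℱ i] P₀)
    (hP₀pos : 0 < μ P₀) (hP₀fin : μ P₀ < ∞)
    (hbounds : ∀ᵐ x ∂μ, x ∈ P₀ →
      (2 : ℝ) ^ (k - 1) < (μ[P₀.indicator σ|ℱ i]) x ∧
        (μ[P₀.indicator σ|ℱ i]) x ≤ (2 : ℝ) ^ k) :
    μ (P₀ ∩ {x | ∃ j, i ≤ j ∧ (2 : ℝ) ^ (k + 1) < (μ[P₀.indicator σ|ℱ j]) x})
        ≤ μ P₀ / 2 ∧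
      μ P₀ ≤ 2 *
        μ (P₀ \ {x | ∃ j, i ≤ j ∧ (2 : ℝ) ^ (k + 1) < (μ[P₀.indicator σ|ℱ j]) x}) :=
  stmt_19_general μ ℱ σ hσ_nonneg hσ_int i k P₀ hP₀ hP₀fin hbounds
end
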